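/- arXiv:2503.17792 — 5 statements merged into one kernel-verified Lean document; each statement's English description precedes it below -/
import Mathlib

section
/- Let J(u) = ∫_Ω u·φ₁ + (1-u)·φ₂ dx + λ√(π/τ) ∫_Ω u·(G_τ * (1-u)) dx where G_τ is the heat kernel and λ, τ > 0. Then J is concave on the convex set K = {u ∈ L²(Ω) : 0 ≤ u(x) ≤ 1 a.e.}, i.e., for all u, v ∈ K and t ∈ [0,1], J(tu + (1-t)v) ≥ tJ(u) + (1-t)J(v). -/
open Real MeasureTheory

namespace ICTM

noncomputable def g (d : ℕ) (s : ℝ) (x : EuclideanSpace ℝ (Fin d)) : ℝ :=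
  (4 * π * s) ^ (-(d:ℝ)/2) * Real.exp (-‖x‖ ^ 2 / (4 * s))

variable {d : ℕ}

lemma g_nonneg {s : ℝ} (hs : 0 < s) (x : EuclideanSpace ℝ (Fin d)) : 0 ≤ g d s x := by
  unfold g; positivity

lemma g_le {s : ℝ} (hs : 0 < s) (x : EuclideanSpace ℝ (Fin d)) :
    g d s x ≤ (4 * π * s) ^ (-(d:ℝ)/2) := by
  unfold g
  have h1 : Real.exp (-‖x‖ ^ 2 / (4 * s)) ≤ 1 := by
    apply Real.exp_le_one_iff.2
    have h0 : (0:ℝ) ≤ ‖x‖^2 := by positivity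
    have h4s : (0:ℝ) < 4 * s := by linarith
    exact div_nonpos_of_nonpos_of_nonneg (by linarith) (le_of_lt h4s)
  nlinarith [Real.rpow_nonneg (show (0:ℝ) ≤ 4*π*s by positivity) (-(d:ℝ)/2)]

lemma continuous_g (s : ℝ) : Continuous (g d s) := by
  unfold g; fun_prop

lemma integrable_rexp_neg_mul_sq_norm {b : ℝ} (hb : 0 < b) :
    Integrable (fun v : EuclideanSpace ℝ (Fin d) => rexp (-b * ‖v‖^2)) := by
  have h := (GaussianFourier.integrable_cexp_neg_mul_sq_norm_add
      (b := (b:ℂ)) (by simpa using hb) 0 (0 : EuclideanSpace ℝ (Fin d))).norm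
  refine h.congr (Filter.Eventually.of_forall fun v => ?_)
  simp [Complex.norm_exp]
  left; norm_cast

lemma integrable_g {s : ℝ} (hs : 0 < s) :
    Integrable (g d s) := by
  have : g d s = fun x => (4 * π * s) ^ (-(d:ℝ)/2) * rexp (-(1/(4*s)) * ‖x‖^2) := by
    funext x; unfold g; ring_nf
  rw [this]
  exact (integrable_rexp_neg_mul_sq_norm (by positivity)).const_mul _

end ICTM

namespace ICTM
variable {d : ℕ}

lemma norm_identity (x y z : EuclideanSpace ℝ (Fin d)) :
    ‖x - z‖^2 + ‖z - y‖^2 = 2*‖z - (2⁻¹:ℝ) • (x + y)‖^2 + ‖x - y‖^2/2 := by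
  set a := (2⁻¹:ℝ) • (x - y) with ha
  set b := z - (2⁻¹:ℝ) • (x + y) with hb
  have h1 : x - z = a - b := by rw [ha, hb]; module
  have h2 : z - y = a + b := by rw [ha, hb]; module
  have hpar := parallelogram_law_with_norm ℝ a b
  have hna : ‖a‖ = 2⁻¹ * ‖x - y‖ := by
    rw [ha, norm_smul]; simp
  rw [h1, h2]
  have hna2 : ‖a‖ * ‖a‖ = (2⁻¹*‖x - y‖) * (2⁻¹*‖x - y‖) := by rw [hna]
  simp only [pow_two]
  nlinarith [hpar, hna2]

lemma g_mul_g {τ : ℝ} (hτ : 0 < τ) (x y z : EuclideanSpace ℝ (Fin d)) :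
    g d (τ/2) (x - z) * g d (τ/2) (z - y)
      = (((4*π*(τ/2)) ^ (-(d:ℝ)/2))^2 * Real.exp (-‖x-y‖^2/(4*τ))) *
        rexp (-(1/τ) * ‖z - (2⁻¹:ℝ)•(x+y)‖^2) := by
  unfold g
  have hkey : -‖x - z‖ ^ 2 / (4 * (τ/2)) + -‖z - y‖ ^ 2 / (4 * (τ/2))
      = -‖x - y‖ ^ 2 / (4 * τ) + -(1/τ) * ‖z - (2⁻¹:ℝ)•(x+y)‖ ^ 2 := by
    have h := norm_identity x y z
    have hτ' : τ ≠ 0 := ne_of_gt hτ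
    set A := ‖x - z‖^2 with hA
    set B := ‖z - y‖^2 with hB
    set C := ‖z - (2⁻¹:ℝ)•(x+y)‖^2 with hC
    set D := ‖x - y‖^2 with hD
    field_simp
    linear_combination (-2) * h
  rw [mul_mul_mul_comm, ← Real.exp_add, hkey, Real.exp_add]
  ring

lemma const_identity {τ : ℝ} (hτ : 0 < τ) :
    ((4*π*(τ/2)) ^ (-(d:ℝ)/2))^2 * (π/(1/τ)) ^ ((d:ℝ)/2) = (4*π*τ) ^ (-(d:ℝ)/2) := by
  have hp : (0:ℝ) < π * τ := by positivity
  have h1 : 4*π*(τ/2) = 2*(π*τ) := by ring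
  have h2 : π/(1/τ) = π*τ := by field_simp
  have h3 : 4*π*τ = 4*(π*τ) := by ring
  rw [h1, h2, h3, Real.rpow_def_of_pos (by positivity), Real.rpow_def_of_pos hp,
      Real.rpow_def_of_pos (by positivity), ← Real.exp_nat_mul, ← Real.exp_add]
  congr 1
  have hl2 : Real.log (2*(π*τ)) = Real.log 2 + Real.log (π*τ) :=
    Real.log_mul (by norm_num) (ne_of_gt hp)
  have hl4 : Real.log (4*(π*τ)) = Real.log 4 + Real.log (π*τ) :=
    Real.log_mul (by norm_num) (ne_of_gt hp)
  have h4 : Real.log (4:ℝ) = 2 * Real.log 2 := by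
    rw [show (4:ℝ) = 2^2 by norm_num, Real.log_pow]; push_cast; ring
  rw [hl2, hl4, h4]
  push_cast
  ring

end ICTM

namespace ICTM
variable {d : ℕ}

lemma integrable_g_mul_g {τ : ℝ} (hτ : 0 < τ) (x y : EuclideanSpace ℝ (Fin d)) :
    Integrable (fun z => g d (τ/2) (x - z) * g d (τ/2) (z - y)) := by
  have : (fun z : EuclideanSpace ℝ (Fin d) => g d (τ/2) (x - z) * g d (τ/2) (z - y))
      = fun z => (((4*π*(τ/2)) ^ (-(d:ℝ)/2))^2 * Real.exp (-‖x-y‖^2/(4*τ))) *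
        rexp (-(1/τ) * ‖z - (2⁻¹:ℝ)•(x+y)‖^2) := by
    funext z; exact g_mul_g hτ x y z
  rw [this]
  exact ((integrable_rexp_neg_mul_sq_norm (by positivity)).comp_sub_right _).const_mul _

lemma chapman {τ : ℝ} (hτ : 0 < τ) (x y : EuclideanSpace ℝ (Fin d)) :
    ∫ z, g d (τ/2) (x - z) * g d (τ/2) (z - y) = g d τ (x - y) := by
  simp_rw [fun z => g_mul_g hτ x y z]
  rw [MeasureTheory.integral_const_mul]
  rw [integral_sub_right_eq_self (fun w => rexp (-(1/τ) * ‖w‖^2)) ((2⁻¹:ℝ)•(x+y))]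
  have hint : ∫ w : EuclideanSpace ℝ (Fin d), rexp (-(1/τ) * ‖w‖^2)
      = (π/(1/τ)) ^ ((d:ℝ)/2) := by
    rw [GaussianFourier.integral_rexp_neg_mul_sq_norm (by positivity)]
    norm_num [finrank_euclideanSpace_fin]
  rw [hint]
  unfold g
  rw [← const_identity hτ]
  ring

end ICTM

namespace ICTM
variable {d : ℕ}

lemma g_sub_comm (s : ℝ) (x z : EuclideanSpace ℝ (Fin d)) :
    g d s (x - z) = g d s (z - x) := by
  unfold g; rw [norm_sub_rev]

lemma psd {τ : ℝ} (hτ : 0 < τ) (F : EuclideanSpace ℝ (Fin d) → ℝ)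
    (hFm : Measurable F) (hFi : Integrable F) :
    0 ≤ ∫ x, F x * ∫ y, g d τ (x - y) * F y := by
  set σ := τ/2 with hσdef
  have hσ : 0 < σ := by positivity
  set Φ : (EuclideanSpace ℝ (Fin d) × EuclideanSpace ℝ (Fin d)) × EuclideanSpace ℝ (Fin d) → ℝ :=
    fun q => (g d σ (q.2 - q.1.1) * F q.1.1) * (g d σ (q.2 - q.1.2) * F q.1.2) with hΦdef
  have hgm : ∀ s : ℝ, Measurable (g d s) := fun s => (continuous_g s).measurable
  have hΦm : Measurable Φ := by
    apply Measurable.mul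
    · exact ((hgm σ).comp (measurable_snd.sub (measurable_fst.fst))).mul
        (hFm.comp measurable_fst.fst)
    · exact ((hgm σ).comp (measurable_snd.sub (measurable_fst.snd))).mul
        (hFm.comp measurable_fst.snd)
  -- sections in z are integrable
  have hsec : ∀ p : EuclideanSpace ℝ (Fin d) × EuclideanSpace ℝ (Fin d),
      Integrable (fun z => Φ (p, z)) := by
    intro p
    have : (fun z => Φ (p, z))
        = fun z => (F p.1 * F p.2) * (g d σ (p.1 - z) * g d σ (z - p.2)) := by
      funext z; simp only [hΦdef]; rw [g_sub_comm]; ring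
    rw [this]
    exact (integrable_g_mul_g hτ p.1 p.2).const_mul _
  -- the z-integral of each section, computed by Chapman–Kolmogorov
  have hzint : ∀ p : EuclideanSpace ℝ (Fin d) × EuclideanSpace ℝ (Fin d),
      (∫ z, Φ (p, z)) = F p.1 * F p.2 * g d τ (p.1 - p.2) := by
    intro p
    have : (fun z => Φ (p, z))
        = fun z => (F p.1 * F p.2) * (g d σ (p.1 - z) * g d σ (z - p.2)) := by
      funext z; simp only [hΦdef]; rw [g_sub_comm]; ring
    rw [this, MeasureTheory.integral_const_mul, chapman hτ]
  -- integrability of (x,y) ↦ F x * F y * g τ (x-y) on the product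
  have hgale : ∀ (x y : EuclideanSpace ℝ (Fin d)),
      g d τ (x - y) ≤ (4 * π * τ) ^ (-(d:ℝ)/2) := fun x y => g_le hτ _
  have hFF : Integrable (fun p : EuclideanSpace ℝ (Fin d) × EuclideanSpace ℝ (Fin d) =>
      |F p.1| * |F p.2|) (volume.prod volume) := hFi.norm.mul_prod hFi.norm
  have hprodInt : Integrable (fun p : EuclideanSpace ℝ (Fin d) × EuclideanSpace ℝ (Fin d) =>
      F p.1 * F p.2 * g d τ (p.1 - p.2)) (volume.prod volume) := by
    apply Integrable.mono' (hFF.const_mul ((4 * π * τ) ^ (-(d:ℝ)/2)))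
    · exact ((hFm.comp measurable_fst).mul (hFm.comp measurable_snd)).mul
        ((hgm τ).comp (measurable_fst.sub measurable_snd)) |>.aestronglyMeasurable
    · refine Filter.Eventually.of_forall fun p => ?_
      have h0 : 0 ≤ g d τ (p.1 - p.2) := g_nonneg hτ _
      have := hgale p.1 p.2
      rw [Real.norm_eq_abs, abs_mul, abs_of_nonneg h0]
      calc |F p.1 * F p.2| * g d τ (p.1 - p.2)
          ≤ |F p.1 * F p.2| * ((4 * π * τ) ^ (-(d:ℝ)/2)) := by
            exact mul_le_mul_of_nonneg_left this (abs_nonneg _)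
        _ = (4 * π * τ) ^ (-(d:ℝ)/2) * (|F p.1| * |F p.2|) := by rw [abs_mul]; ring
  -- integrability of Φ on the iterated product
  have hΦint : Integrable Φ ((volume.prod volume).prod volume) := by
    rw [MeasureTheory.integrable_prod_iff hΦm.aestronglyMeasurable]
    constructor
    · exact Filter.Eventually.of_forall hsec
    · have : (fun p : EuclideanSpace ℝ (Fin d) × EuclideanSpace ℝ (Fin d) =>
          ∫ z, ‖Φ (p, z)‖) = fun p => |F p.1| * |F p.2| * g d τ (p.1 - p.2) := by
        funext p
        have h1 : (fun z => ‖Φ (p, z)‖)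
            = fun z => (|F p.1| * |F p.2|) * (g d σ (p.1 - z) * g d σ (z - p.2)) := by
          funext z
          simp only [hΦdef, Real.norm_eq_abs]
          rw [abs_mul, abs_mul, abs_mul, abs_of_nonneg (g_nonneg hσ _),
            abs_of_nonneg (g_nonneg hσ _), g_sub_comm]
          ring
        rw [h1, MeasureTheory.integral_const_mul, chapman hτ]
      rw [this]
      apply Integrable.mono' (hFF.const_mul ((4 * π * τ) ^ (-(d:ℝ)/2)))
      · exact (((hFm.comp measurable_fst).abs.mul (hFm.comp measurable_snd).abs).mul
          ((hgm τ).comp (measurable_fst.sub measurable_snd))).aestronglyMeasurable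
      · refine Filter.Eventually.of_forall fun p => ?_
        have h0 : 0 ≤ g d τ (p.1 - p.2) := g_nonneg hτ _
        rw [Real.norm_eq_abs, abs_mul, abs_mul, abs_abs, abs_abs, abs_of_nonneg h0]
        calc |F p.1| * |F p.2| * g d τ (p.1 - p.2)
            ≤ |F p.1| * |F p.2| * ((4 * π * τ) ^ (-(d:ℝ)/2)) :=
              mul_le_mul_of_nonneg_left (hgale p.1 p.2) (by positivity)
          _ = (4 * π * τ) ^ (-(d:ℝ)/2) * (|F p.1| * |F p.2|) := by ring
  -- now the chain of equalities
  have step1 : (∫ x, F x * ∫ y, g d τ (x - y) * F y)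
      = ∫ x, ∫ y, F x * F y * g d τ (x - y) := by
    congr 1; funext x
    rw [← MeasureTheory.integral_const_mul]
    congr 1; funext y; ring
  have step2 : (∫ x, ∫ y, F x * F y * g d τ (x - y))
      = ∫ p : EuclideanSpace ℝ (Fin d) × EuclideanSpace ℝ (Fin d),
          F p.1 * F p.2 * g d τ (p.1 - p.2) ∂(volume.prod volume) :=
    (MeasureTheory.integral_prod _ hprodInt).symm
  have step3 : (∫ p : EuclideanSpace ℝ (Fin d) × EuclideanSpace ℝ (Fin d),
          F p.1 * F p.2 * g d τ (p.1 - p.2) ∂(volume.prod volume))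
      = ∫ p, (∫ z, Φ (p, z)) ∂(volume.prod volume) := by
    congr 1; funext p; rw [hzint p]
  have step4 : (∫ p, (∫ z, Φ (p, z)) ∂(volume.prod volume))
      = ∫ z, ∫ p, Φ (p, z) ∂(volume.prod volume) :=
    MeasureTheory.integral_integral_swap hΦint
  have step5 : ∀ z, (∫ p, Φ (p, z) ∂(volume.prod volume))
      = (∫ x, g d σ (z - x) * F x) * (∫ x, g d σ (z - x) * F x) := by
    intro z
    exact MeasureTheory.integral_prod_mul (fun x => g d σ (z - x) * F x)
      (fun x => g d σ (z - x) * F x)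
  rw [step1, step2, step3, step4]
  refine MeasureTheory.integral_nonneg fun z => ?_
  show (0:ℝ) ≤ ∫ p, Φ (p, z) ∂(volume.prod volume)
  rw [step5 z]
  exact mul_self_nonneg _

end ICTM

namespace ICTM
variable {d : ℕ}

lemma psd_restrict {τ : ℝ} (hτ : 0 < τ) (Ω : Set (EuclideanSpace ℝ (Fin d)))
    (hΩm : MeasurableSet Ω) (hΩb : Bornology.IsBounded Ω)
    (f : EuclideanSpace ℝ (Fin d) → ℝ) (hfm : Measurable f) (hfb : ∀ x, |f x| ≤ 1) :
    0 ≤ ∫ x in Ω, f x * ∫ y in Ω, g d τ (x - y) * f y := by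
  set F := Ω.indicator f with hFdef
  have hFm : Measurable F := hfm.indicator hΩm
  have hΩfin : volume Ω < ⊤ := hΩb.measure_lt_top
  have hFi : Integrable F := by
    rw [hFdef, MeasureTheory.integrable_indicator_iff hΩm]
    have : IsFiniteMeasure (volume.restrict Ω) :=
      ⟨by rwa [Measure.restrict_apply_univ]⟩
    exact Integrable.mono' (integrable_const 1) hfm.aestronglyMeasurable
      (Filter.Eventually.of_forall fun x => by simpa using hfb x)
  have hinner : ∀ x, (∫ y, g d τ (x - y) * F y) = ∫ y in Ω, g d τ (x - y) * f y := by
    intro x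
    rw [← MeasureTheory.integral_indicator hΩm]
    congr 1; funext y
    rw [hFdef]
    exact (Set.indicator_mul_right Ω (fun y => g d τ (x - y)) f).symm
  have houter : (fun x => F x * ∫ y, g d τ (x - y) * F y)
      = Ω.indicator (fun x => f x * ∫ y in Ω, g d τ (x - y) * f y) := by
    funext x
    rw [hFdef, Set.indicator_mul_left, hinner x]
  have := psd hτ F hFm hFi
  rwa [houter, MeasureTheory.integral_indicator hΩm] at this

end ICTM

namespace ICTM
variable {d : ℕ}

lemma prod_integrable {τ : ℝ} (hτ : 0 < τ) (Ω : Set (EuclideanSpace ℝ (Fin d)))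
    (hΩm : MeasurableSet Ω) (hΩb : Bornology.IsBounded Ω)
    (a b : EuclideanSpace ℝ (Fin d) → ℝ) (ham : Measurable a) (hbm : Measurable b)
    (haB : ∀ x, |a x| ≤ 1) (hbB : ∀ x, |b x| ≤ 1) :
    Integrable (fun p : EuclideanSpace ℝ (Fin d) × EuclideanSpace ℝ (Fin d) =>
      a p.1 * b p.2 * g d τ (p.1 - p.2))
      ((volume.restrict Ω).prod (volume.restrict Ω)) := by
  have : IsFiniteMeasure (volume.restrict Ω) :=
    ⟨by rw [Measure.restrict_apply_univ]; exact hΩb.measure_lt_top⟩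
  apply Integrable.mono' (integrable_const ((4 * π * τ) ^ (-(d:ℝ)/2)))
  · exact (((ham.comp measurable_fst).mul (hbm.comp measurable_snd)).mul
      (((continuous_g τ).measurable).comp (measurable_fst.sub measurable_snd))).aestronglyMeasurable
  · refine Filter.Eventually.of_forall fun p => ?_
    rw [Real.norm_eq_abs, abs_mul, abs_mul, abs_of_nonneg (g_nonneg hτ _)]
    calc |a p.1| * |b p.2| * g d τ (p.1 - p.2)
        ≤ 1 * 1 * ((4 * π * τ) ^ (-(d:ℝ)/2)) := by
          apply mul_le_mul (mul_le_mul (haB _) (hbB _) (abs_nonneg _) zero_le_one)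
            (g_le hτ _) (g_nonneg hτ _) (by norm_num)
      _ = (4 * π * τ) ^ (-(d:ℝ)/2) := by ring

lemma I_eq_prod {τ : ℝ} (hτ : 0 < τ) (Ω : Set (EuclideanSpace ℝ (Fin d)))
    (hΩm : MeasurableSet Ω) (hΩb : Bornology.IsBounded Ω)
    (a b : EuclideanSpace ℝ (Fin d) → ℝ) (ham : Measurable a) (hbm : Measurable b)
    (haB : ∀ x, |a x| ≤ 1) (hbB : ∀ x, |b x| ≤ 1) :
    (∫ x in Ω, a x * ∫ y in Ω, g d τ (x - y) * b y)
      = ∫ p : EuclideanSpace ℝ (Fin d) × EuclideanSpace ℝ (Fin d),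
          a p.1 * b p.2 * g d τ (p.1 - p.2)
          ∂((volume.restrict Ω).prod (volume.restrict Ω)) := by
  rw [MeasureTheory.integral_prod _ (prod_integrable hτ Ω hΩm hΩb a b ham hbm haB hbB)]
  congr 1; funext x
  rw [← MeasureTheory.integral_const_mul]
  congr 1; funext y; ring

end ICTM

namespace ICTM
variable {d : ℕ}

lemma Qkey {τ : ℝ} (hτ : 0 < τ) (Ω : Set (EuclideanSpace ℝ (Fin d)))
    (hΩm : MeasurableSet Ω) (hΩb : Bornology.IsBounded Ω)
    (u v : EuclideanSpace ℝ (Fin d) → ℝ) (hum : Measurable u) (hvm : Measurable v)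
    (hu01 : ∀ x, u x ∈ Set.Icc (0:ℝ) 1) (hv01 : ∀ x, v x ∈ Set.Icc (0:ℝ) 1)
    (t : ℝ) (ht0 : 0 ≤ t) (ht1 : t ≤ 1) :
    t * (∫ x in Ω, u x * ∫ y in Ω, g d τ (x - y) * (1 - u y))
      + (1-t) * (∫ x in Ω, v x * ∫ y in Ω, g d τ (x - y) * (1 - v y))
    ≤ ∫ x in Ω, (t * u x + (1-t) * v x) *
        ∫ y in Ω, g d τ (x - y) * (1 - (t * u y + (1-t) * v y)) := by
  have habs : ∀ (h : EuclideanSpace ℝ (Fin d) → ℝ), (∀ x, h x ∈ Set.Icc (0:ℝ) 1) →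
      (∀ x, |h x| ≤ 1) ∧ (∀ x, |1 - h x| ≤ 1) := by
    intro h hh
    constructor <;> intro x <;> rcases hh x with ⟨h0, h1⟩ <;> rw [abs_le] <;>
      constructor <;> linarith
  obtain ⟨huB, huB'⟩ := habs u hu01
  obtain ⟨hvB, hvB'⟩ := habs v hv01
  have hwm : Measurable (fun x => t * u x + (1-t) * v x) :=
    (hum.const_mul t).add (hvm.const_mul (1-t))
  have hw01 : ∀ x, (t * u x + (1-t) * v x) ∈ Set.Icc (0:ℝ) 1 := by
    intro x
    rcases hu01 x with ⟨h0, h1⟩; rcases hv01 x with ⟨h2, h3⟩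
    constructor <;> nlinarith
  obtain ⟨hwB, hwB'⟩ := habs _ hw01
  have hfm : Measurable (fun x => u x - v x) := hum.sub hvm
  have hfB : ∀ x, |u x - v x| ≤ 1 := by
    intro x
    rcases hu01 x with ⟨h0, h1⟩; rcases hv01 x with ⟨h2, h3⟩
    rw [abs_le]; constructor <;> linarith
  rw [I_eq_prod hτ Ω hΩm hΩb u (fun y => 1 - u y) hum (measurable_const.sub hum) huB huB',
      I_eq_prod hτ Ω hΩm hΩb v (fun y => 1 - v y) hvm (measurable_const.sub hvm) hvB hvB',
      I_eq_prod hτ Ω hΩm hΩb _ (fun y => 1 - (t * u y + (1-t) * v y)) hwm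
        (measurable_const.sub hwm) hwB hwB']
  have Mu : Integrable (fun p : EuclideanSpace ℝ (Fin d) × EuclideanSpace ℝ (Fin d) =>
      u p.1 * (1 - u p.2) * g d τ (p.1 - p.2))
      ((volume.restrict Ω).prod (volume.restrict Ω)) :=
    prod_integrable hτ Ω hΩm hΩb u (fun y => 1 - u y) hum
      (measurable_const.sub hum) huB huB'
  have Mv : Integrable (fun p : EuclideanSpace ℝ (Fin d) × EuclideanSpace ℝ (Fin d) =>
      v p.1 * (1 - v p.2) * g d τ (p.1 - p.2))
      ((volume.restrict Ω).prod (volume.restrict Ω)) :=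
    prod_integrable hτ Ω hΩm hΩb v (fun y => 1 - v y) hvm
      (measurable_const.sub hvm) hvB hvB'
  have Mf : Integrable (fun p : EuclideanSpace ℝ (Fin d) × EuclideanSpace ℝ (Fin d) =>
      (u p.1 - v p.1) * (u p.2 - v p.2) * g d τ (p.1 - p.2))
      ((volume.restrict Ω).prod (volume.restrict Ω)) :=
    prod_integrable hτ Ω hΩm hΩb (fun x => u x - v x) (fun x => u x - v x)
      hfm hfm hfB hfB
  have expand : (fun p : EuclideanSpace ℝ (Fin d) × EuclideanSpace ℝ (Fin d) =>
        (t * u p.1 + (1-t) * v p.1) * (1 - (t * u p.2 + (1-t) * v p.2)) * g d τ (p.1 - p.2))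
      = fun p => t * (u p.1 * (1 - u p.2) * g d τ (p.1 - p.2))
          + (1-t) * (v p.1 * (1 - v p.2) * g d τ (p.1 - p.2))
          + (t*(1-t)) * ((u p.1 - v p.1) * (u p.2 - v p.2) * g d τ (p.1 - p.2)) := by
    funext p; ring
  rw [expand]
  have MAB : Integrable (fun p : EuclideanSpace ℝ (Fin d) × EuclideanSpace ℝ (Fin d) =>
      t * (u p.1 * (1 - u p.2) * g d τ (p.1 - p.2))
        + (1-t) * (v p.1 * (1 - v p.2) * g d τ (p.1 - p.2)))
      ((volume.restrict Ω).prod (volume.restrict Ω)) :=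
    (Mu.const_mul t).add (Mv.const_mul (1-t))
  rw [MeasureTheory.integral_add MAB (Mf.const_mul (t*(1-t))),
    MeasureTheory.integral_add (Mu.const_mul t) (Mv.const_mul (1-t)),
    MeasureTheory.integral_const_mul, MeasureTheory.integral_const_mul,
    MeasureTheory.integral_const_mul]
  have hPf : 0 ≤ ∫ p : EuclideanSpace ℝ (Fin d) × EuclideanSpace ℝ (Fin d),
      (u p.1 - v p.1) * (u p.2 - v p.2) * g d τ (p.1 - p.2)
      ∂((volume.restrict Ω).prod (volume.restrict Ω)) := by
    rw [← I_eq_prod hτ Ω hΩm hΩb (fun x => u x - v x) (fun x => u x - v x) hfm hfm hfB hfB]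
    exact psd_restrict hτ Ω hΩm hΩb (fun x => u x - v x) hfm hfB
  nlinarith [hPf, mul_nonneg ht0 (by linarith : (0:ℝ) ≤ 1 - t)]

end ICTM

namespace ICTM

lemma exists_rep {α : Type*} [MeasurableSpace α] {μ : MeasureTheory.Measure α} {u : α → ℝ}
    (hm : AEStronglyMeasurable u μ) (h01 : ∀ᵐ x ∂μ, u x ∈ Set.Icc (0:ℝ) 1) :
    ∃ u' : α → ℝ, Measurable u' ∧ (∀ x, u' x ∈ Set.Icc (0:ℝ) 1) ∧ u =ᵐ[μ] u' := by
  refine ⟨fun x => max 0 (min 1 (hm.mk u x)), ?_, ?_, ?_⟩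
  · exact measurable_const.max (measurable_const.min hm.stronglyMeasurable_mk.measurable)
  · intro x
    exact ⟨le_max_left _ _, max_le zero_le_one (min_le_left _ _)⟩
  · filter_upwards [hm.ae_eq_mk, h01] with x hx h
    rcases h with ⟨h0, h1⟩
    rw [← hx, min_eq_right h1, max_eq_right h0]

end ICTM


/-- Concavity of the ICTM objective: with `J u = ∫_Ω u φ₁ + (1-u) φ₂ + λ √(π/τ) ∫_Ω u (G_τ*(1-u))`,
where `G_τ` is the heat kernel and `λ, τ > 0`, `J` is concave on
`K = {u ∈ L²(Ω) : 0 ≤ u ≤ 1 a.e.}`. -/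
theorem stmt_0 (d : ℕ) (Ω : Set (EuclideanSpace ℝ (Fin d)))
    (hΩm : MeasurableSet Ω) (hΩb : Bornology.IsBounded Ω)
    (φ₁ φ₂ : EuclideanSpace ℝ (Fin d) → ℝ)
    (hφ₁ : MeasureTheory.MemLp φ₁ 2 (volume.restrict Ω))
    (hφ₂ : MeasureTheory.MemLp φ₂ 2 (volume.restrict Ω))
    (lam τ : ℝ) (hlam : 0 < lam) (hτ : 0 < τ)
    (G : EuclideanSpace ℝ (Fin d) → ℝ)
    (hG : ∀ x, G x = (4 * π * τ) ^ (-(d:ℝ)/2) * Real.exp (-‖x‖ ^ 2 / (4 * τ)))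
    (conv : (EuclideanSpace ℝ (Fin d) → ℝ) → EuclideanSpace ℝ (Fin d) → ℝ)
    (hconv : ∀ f x, conv f x = ∫ y in Ω, G (x - y) * f y)
    (J : (EuclideanSpace ℝ (Fin d) → ℝ) → ℝ)
    (hJ : ∀ u, J u = (∫ x in Ω, (u x * φ₁ x + (1 - u x) * φ₂ x))
        + lam * Real.sqrt (π / τ) * ∫ x in Ω, u x * conv (fun y => 1 - u y) x)
    (K : Set (EuclideanSpace ℝ (Fin d) → ℝ))
    (hK : K = {u | MeasureTheory.MemLp u 2 (volume.restrict Ω) ∧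
        ∀ᵐ x ∂(volume.restrict Ω), u x ∈ Set.Icc (0:ℝ) 1}) :
    ∀ u ∈ K, ∀ v ∈ K, ∀ t : ℝ, t ∈ Set.Icc (0:ℝ) 1 →
      t * J u + (1 - t) * J v ≤ J (fun x => t * u x + (1 - t) * v x) := by
  intro u hu v hv t ht
  rw [hK] at hu hv
  obtain ⟨huL, hu01⟩ := hu
  obtain ⟨hvL, hv01⟩ := hv
  obtain ⟨ht0, ht1⟩ := ht
  have hGg : G = ICTM.g d τ := by
    funext x; rw [hG]; rfl
  have : IsFiniteMeasure (volume.restrict Ω) :=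
    ⟨by rw [Measure.restrict_apply_univ]; exact hΩb.measure_lt_top⟩
  obtain ⟨u', hu'm, hu'01, hu'eq⟩ := ICTM.exists_rep huL.aestronglyMeasurable hu01
  obtain ⟨v', hv'm, hv'01, hv'eq⟩ := ICTM.exists_rep hvL.aestronglyMeasurable hv01
  -- J computed on an a.e.-equal measurable representative
  have JQ : ∀ a a' : EuclideanSpace ℝ (Fin d) → ℝ, a =ᵐ[volume.restrict Ω] a' →
      J a = (∫ x in Ω, (a' x * φ₁ x + (1 - a' x) * φ₂ x))
        + lam * Real.sqrt (π / τ) *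
          ∫ x in Ω, a' x * ∫ y in Ω, ICTM.g d τ (x - y) * (1 - a' y) := by
    intro a a' haa'
    rw [hJ a]
    have h1 : (∫ x in Ω, (a x * φ₁ x + (1 - a x) * φ₂ x))
        = ∫ x in Ω, (a' x * φ₁ x + (1 - a' x) * φ₂ x) := by
      apply MeasureTheory.integral_congr_ae
      filter_upwards [haa'] with x hx
      rw [hx]
    have hconv' : ∀ x, conv (fun y => 1 - a y) x
        = ∫ y in Ω, ICTM.g d τ (x - y) * (1 - a' y) := by
      intro x
      rw [hconv, hGg]
      apply MeasureTheory.integral_congr_ae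
      filter_upwards [haa'] with y hy
      rw [hy]
    have h2 : (∫ x in Ω, a x * conv (fun y => 1 - a y) x)
        = ∫ x in Ω, a' x * ∫ y in Ω, ICTM.g d τ (x - y) * (1 - a' y) := by
      apply MeasureTheory.integral_congr_ae
      filter_upwards [haa'] with x hx
      rw [hx, hconv' x]
    rw [h1, h2]
  have hweq : (fun x => t * u x + (1 - t) * v x)
      =ᵐ[volume.restrict Ω] (fun x => t * u' x + (1 - t) * v' x) := by
    filter_upwards [hu'eq, hv'eq] with x hx hy
    rw [hx, hy]
  have hJu := JQ u u' hu'eq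
  have hJv := JQ v v' hv'eq
  have hJw := JQ _ _ hweq
  -- linear part
  have hφ₁i : Integrable φ₁ (volume.restrict Ω) := hφ₁.integrable one_le_two
  have hφ₂i : Integrable φ₂ (volume.restrict Ω) := hφ₂.integrable one_le_two
  have linInt : ∀ a : EuclideanSpace ℝ (Fin d) → ℝ, Measurable a →
      (∀ x, a x ∈ Set.Icc (0:ℝ) 1) →
      Integrable (fun x => a x * φ₁ x + (1 - a x) * φ₂ x) (volume.restrict Ω) := by
    intro a ham ha01
    apply Integrable.add
    · exact hφ₁i.bdd_mul ham.aestronglyMeasurable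
        (c := 1) (Filter.Eventually.of_forall fun x => by
          rcases ha01 x with ⟨h0, h1⟩
          rw [Real.norm_eq_abs, abs_of_nonneg h0]; exact h1)
    · exact hφ₂i.bdd_mul (measurable_const.sub ham).aestronglyMeasurable
        (c := 1) (Filter.Eventually.of_forall fun x => by
          rcases ha01 x with ⟨h0, h1⟩
          rw [Real.norm_eq_abs, abs_of_nonneg (by linarith)]; linarith)
  have hw'01 : ∀ x, (t * u' x + (1 - t) * v' x) ∈ Set.Icc (0:ℝ) 1 := by
    intro x
    rcases hu'01 x with ⟨h0, h1⟩; rcases hv'01 x with ⟨h2, h3⟩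
    constructor <;> nlinarith
  have linW : (∫ x in Ω, ((t * u' x + (1 - t) * v' x) * φ₁ x
        + (1 - (t * u' x + (1 - t) * v' x)) * φ₂ x))
      = t * (∫ x in Ω, (u' x * φ₁ x + (1 - u' x) * φ₂ x))
        + (1 - t) * (∫ x in Ω, (v' x * φ₁ x + (1 - v' x) * φ₂ x)) := by
    have hptw : (fun x => (t * u' x + (1 - t) * v' x) * φ₁ x
          + (1 - (t * u' x + (1 - t) * v' x)) * φ₂ x)
        = fun x => t * (u' x * φ₁ x + (1 - u' x) * φ₂ x)
          + (1 - t) * (v' x * φ₁ x + (1 - v' x) * φ₂ x) := by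
      funext x; ring
    rw [hptw, MeasureTheory.integral_add ((linInt u' hu'm hu'01).const_mul t)
      ((linInt v' hv'm hv'01).const_mul (1 - t)),
      MeasureTheory.integral_const_mul, MeasureTheory.integral_const_mul]
  -- quadratic part
  have hQ := ICTM.Qkey hτ Ω hΩm hΩb u' v' hu'm hv'm hu'01 hv'01 t ht0 ht1
  have hc : (0:ℝ) ≤ lam * Real.sqrt (π / τ) := by positivity
  rw [hJu, hJv, hJw, linW]
  nlinarith [mul_le_mul_of_nonneg_left hQ hc]
end

section
/- Stability of TP-ICTM iteration (discrete form): With J and φ_u as above (K symmetric positive semidefinite, λ ≥ 0), suppose u^{k+1} : Ω → {0,1} is obtained from u^k : Ω → {0,1} by flipping values only at points x where the flip is sign-consistent with φ_{u^k} (flip 0→1 only where φ_{u^k}(x) < 0, flip 1→0 only where φ_{u^k}(x) > 0). Then J(u^{k+1}) ≤ J(u^k). -/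
/-- Stability of the TP-ICTM iteration (discrete form): if `u'` is obtained from the
binary function `u` by flipping values only at points where the flip is sign-consistent
with `φ_u` (0→1 only where `φ_u < 0`, 1→0 only where `φ_u > 0`), then `J u' ≤ J u`. -/
theorem stmt_4 {Ω : Type*} [Fintype Ω] (a b : Ω → ℝ) (K : Ω → Ω → ℝ) (lam : ℝ)
    (hlam : 0 ≤ lam)
    (hsymm : ∀ x y, K x y = K y x)
    (hpsd : ∀ w : Ω → ℝ, 0 ≤ ∑ x, ∑ y, w x * K x y * w y)
    (J : (Ω → ℝ) → ℝ)
    (hJ : ∀ u, J u = (∑ x, (u x * a x + (1 - u x) * b x))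
        + lam * ∑ x, ∑ y, u x * K x y * (1 - u y))
    (φ : (Ω → ℝ) → Ω → ℝ)
    (hφ : ∀ u x, φ u x = a x - b x + lam * ∑ y, K x y * (1 - 2 * u y))
    (u u' : Ω → ℝ)
    (hu : ∀ x, u x = 0 ∨ u x = 1) (hu' : ∀ x, u' x = 0 ∨ u' x = 1)
    (h01 : ∀ x, u' x = 1 → u x = 0 → φ u x < 0)
    (h10 : ∀ x, u' x = 0 → u x = 1 → φ u x > 0) :
    J u' ≤ J u := by
  classical
  have swap : (∑ x, ∑ y, u' x * K x y * u y) = ∑ x, ∑ y, u x * K x y * u' y := by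
    rw [Finset.sum_comm]
    exact Finset.sum_congr rfl fun x _ => Finset.sum_congr rfl fun y _ => by
      rw [hsymm]; ring
  -- first-order term expansion
  have hφ' : ∑ x, (u' x - u x) * φ u x
      = (∑ x, (u' x - u x) * (a x - b x))
        + lam * ∑ x, ∑ y, (u' x - u x) * K x y * (1 - 2 * u y) := by
    have hx : ∀ x, (u' x - u x) * φ u x
        = (u' x - u x) * (a x - b x)
          + lam * ∑ y, (u' x - u x) * K x y * (1 - 2 * u y) := by
      intro x
      rw [hφ, mul_add, Finset.mul_sum, Finset.mul_sum, Finset.mul_sum]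
      congr 1
      exact Finset.sum_congr rfl fun y _ => by ring
    simp only [hx, Finset.sum_add_distrib, ← Finset.mul_sum]
  -- quadratic expansion
  have hquad : (∑ x, ∑ y, u' x * K x y * (1 - u' y))
      = (∑ x, ∑ y, u x * K x y * (1 - u y))
        + (∑ x, ∑ y, (u' x - u x) * K x y * (1 - 2 * u y))
        - ∑ x, ∑ y, (u' x - u x) * K x y * (u' y - u y) := by
    have e : ∀ x y, u' x * K x y * (1 - u' y)
        = u x * K x y * (1 - u y) + (u' x - u x) * K x y * (1 - 2 * u y)
          - (u' x - u x) * K x y * (u' y - u y)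
          + (u' x * K x y * u y - u x * K x y * u' y) := fun x y => by ring
    calc ∑ x, ∑ y, u' x * K x y * (1 - u' y)
        = ∑ x, ∑ y, (u x * K x y * (1 - u y) + (u' x - u x) * K x y * (1 - 2 * u y)
            - (u' x - u x) * K x y * (u' y - u y)
            + (u' x * K x y * u y - u x * K x y * u' y)) :=
          Finset.sum_congr rfl fun x _ => Finset.sum_congr rfl fun y _ => e x y
      _ = _ := by
          simp only [Finset.sum_add_distrib, Finset.sum_sub_distrib]
          rw [swap]; ring
  -- key identity
  have key : J u' = J u + (∑ x, (u' x - u x) * φ u x)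
      - lam * ∑ x, ∑ y, (u' x - u x) * K x y * (u' y - u y) := by
    rw [hJ, hJ, hφ', hquad]
    have hsingle : ∑ x, (u' x * a x + (1 - u' x) * b x)
        = (∑ x, (u x * a x + (1 - u x) * b x)) + ∑ x, (u' x - u x) * (a x - b x) := by
      rw [← Finset.sum_add_distrib]
      exact Finset.sum_congr rfl fun x _ => by ring
    rw [hsingle]; ring
  have hsum : ∑ x, (u' x - u x) * φ u x ≤ 0 := by
    refine Finset.sum_nonpos fun x _ => ?_
    rcases hu x with h0 | h1
    · rcases hu' x with h0' | h1'
      · simp [h0, h0']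
      · have := h01 x h1' h0; rw [h0, h1']; nlinarith
    · rcases hu' x with h0' | h1'
      · have := h10 x h0' h1; rw [h1, h0']; nlinarith
      · simp [h1, h1']
  have hq : 0 ≤ ∑ x, ∑ y, (u' x - u x) * K x y * (u' y - u y) := hpsd _
  nlinarith [mul_nonneg hlam hq]
end

section
/- Full coordinate-descent stability: Under the setting of the previous statement, additionally let Θ range over a set S and J(u,Θ) = Σ_x u(x)F₁(Θ)(x) + (1-u(x))F₂(Θ)(x) + λ Σ_{x,y} u(x)K(x,y)(1-u(y)). If Θ^{k+1} minimizes Θ ↦ J(u^{k+1},Θ) over S, and u^{k+1} is obtained from u^k by sign-consistent flips with respect to φ(x) = F₁(Θ^k)(x) - F₂(Θ^k)(x) + λ Σ_y K(x,y)(1-2u^k(y)), then J(u^{k+1},Θ^{k+1}) ≤ J(u^k,Θ^k). -/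
/-- Full coordinate-descent stability of TP-ICTM: if `u'` is obtained from `u` by
sign-consistent flips with respect to `φ` built from `Θ = Θk`, and `Θ'` minimizes
`Θ ↦ J(u', Θ)` over `S`, then `J(u', Θ') ≤ J(u, Θk)`. -/
theorem stmt_5 {Ω : Type*} [Fintype Ω] {S : Type*} (F₁ F₂ : S → Ω → ℝ)
    (K : Ω → Ω → ℝ) (lam : ℝ) (hlam : 0 ≤ lam)
    (hsymm : ∀ x y, K x y = K y x)
    (hpsd : ∀ w : Ω → ℝ, 0 ≤ ∑ x, ∑ y, w x * K x y * w y)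
    (J : (Ω → ℝ) → S → ℝ)
    (hJ : ∀ u Θ, J u Θ = (∑ x, (u x * F₁ Θ x + (1 - u x) * F₂ Θ x))
        + lam * ∑ x, ∑ y, u x * K x y * (1 - u y))
    (u u' : Ω → ℝ) (Θk Θ' : S)
    (hu : ∀ x, u x = 0 ∨ u x = 1) (hu' : ∀ x, u' x = 0 ∨ u' x = 1)
    (φ : Ω → ℝ)
    (hφ : ∀ x, φ x = F₁ Θk x - F₂ Θk x + lam * ∑ y, K x y * (1 - 2 * u y))
    (h01 : ∀ x, u' x = 1 → u x = 0 → φ x < 0)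
    (h10 : ∀ x, u' x = 0 → u x = 1 → φ x > 0)
    (hΘ' : ∀ Θ : S, J u' Θ' ≤ J u' Θ) :
    J u' Θ' ≤ J u Θk := by
  have hstep : J u' Θk ≤ J u Θk := by
    -- pointwise sign condition
    have hd : ∀ x, (u' x - u x) * φ x ≤ 0 := by
      intro x
      rcases hu x with h0 | h1 <;> rcases hu' x with h0' | h1'
      · simp [h0, h0']
      · have := h01 x h1' h0
        nlinarith [this]
      · have := h10 x h0' h1
        nlinarith [this]
      · simp [h1, h1']
    have hsum_d : ∑ x, (u' x - u x) * φ x ≤ 0 :=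
      Finset.sum_nonpos fun x _ => hd x
    have hpsd' := hpsd (fun x => u' x - u x)
    -- symmetry swap identity
    have hswap : ∑ x, ∑ y, K x y * (u' x * u y) = ∑ x, ∑ y, K x y * (u x * u' y) := by
      rw [Finset.sum_comm]
      apply Finset.sum_congr rfl
      intro x _
      apply Finset.sum_congr rfl
      intro y _
      rw [hsymm y x]; ring
    -- main identity
    have hid : J u' Θk - J u Θk
        = (∑ x, (u' x - u x) * φ x)
          - lam * ∑ x, ∑ y, (u' x - u x) * K x y * (u' y - u y) := by
      have hpt : ∀ x y, u' x * K x y * (1 - u' y) - u x * K x y * (1 - u y)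
          = (u' x - u x) * (K x y * (1 - 2 * u y)) - (u' x - u x) * K x y * (u' y - u y)
            + (K x y * (u' x * u y) - K x y * (u x * u' y)) := fun x y => by ring
      have e1 : (∑ x, ∑ y, u' x * K x y * (1 - u' y))
          - (∑ x, ∑ y, u x * K x y * (1 - u y))
          = (∑ x, ∑ y, (u' x - u x) * (K x y * (1 - 2 * u y)))
            - (∑ x, ∑ y, (u' x - u x) * K x y * (u' y - u y))
            + ((∑ x, ∑ y, K x y * (u' x * u y)) - ∑ x, ∑ y, K x y * (u x * u' y)) := by
        rw [← Finset.sum_sub_distrib]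
        simp_rw [← Finset.sum_sub_distrib, hpt, Finset.sum_add_distrib]
      have hpt2 : ∀ x, (u' x - u x) * φ x
          = (u' x - u x) * (F₁ Θk x - F₂ Θk x)
            + lam * ∑ y, (u' x - u x) * (K x y * (1 - 2 * u y)) := by
        intro x
        rw [hφ x, ← Finset.mul_sum]
        ring
      have e2 : (∑ x, (u' x - u x) * φ x)
          = (∑ x, (u' x - u x) * (F₁ Θk x - F₂ Θk x))
            + lam * ∑ x, ∑ y, (u' x - u x) * (K x y * (1 - 2 * u y)) := by
        simp_rw [hpt2, Finset.sum_add_distrib, ← Finset.mul_sum]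
      have e3 : (∑ x, (u' x * F₁ Θk x + (1 - u' x) * F₂ Θk x))
          - (∑ x, (u x * F₁ Θk x + (1 - u x) * F₂ Θk x))
          = ∑ x, (u' x - u x) * (F₁ Θk x - F₂ Θk x) := by
        rw [← Finset.sum_sub_distrib]
        apply Finset.sum_congr rfl
        intro x _
        ring
      rw [hJ, hJ, e2]
      have : lam * (∑ x, ∑ y, u' x * K x y * (1 - u' y))
          - lam * (∑ x, ∑ y, u x * K x y * (1 - u y))
          = lam * ((∑ x, ∑ y, u' x * K x y * (1 - u' y))
            - ∑ x, ∑ y, u x * K x y * (1 - u y)) := by ring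
      rw [show (∑ x, (u' x * F₁ Θk x + (1 - u' x) * F₂ Θk x))
          + lam * (∑ x, ∑ y, u' x * K x y * (1 - u' y))
          - ((∑ x, (u x * F₁ Θk x + (1 - u x) * F₂ Θk x))
          + lam * (∑ x, ∑ y, u x * K x y * (1 - u y)))
          = ((∑ x, (u' x * F₁ Θk x + (1 - u' x) * F₂ Θk x))
            - ∑ x, (u x * F₁ Θk x + (1 - u x) * F₂ Θk x))
          + lam * ((∑ x, ∑ y, u' x * K x y * (1 - u' y))
            - ∑ x, ∑ y, u x * K x y * (1 - u y)) from by ring]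
      rw [e1, e3, hswap]
      ring
    nlinarith [mul_nonneg hlam hpsd']
  exact le_trans (hΘ' Θk) hstep
end

section
/- Simple point flip preserves connectivity count in a concrete configuration: In the 2D grid ℤ², let X be a finite 4-connected set and x ∈ X a point such that N₄*(x) ∩ X is nonempty and the geodesic neighborhood N₄²(x, X\{x}) has exactly one 4-connected component, and N₈¹(x, complement of X) has exactly one 8-connected component. Then X \ {x} is still 4-connected (has the same number of 4-connected components as X). -/
/-- 4-adjacency on the 2D grid `ℤ²`. -/
def adj4 (p q : ℤ × ℤ) : Prop := (p.1 - q.1).natAbs + (p.2 - q.2).natAbs = 1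

/-- 8-adjacency on the 2D grid `ℤ²`. -/
def adj8 (p q : ℤ × ℤ) : Prop :=
  p ≠ q ∧ (p.1 - q.1).natAbs ≤ 1 ∧ (p.2 - q.2).natAbs ≤ 1

/-- Reachability within a set `X` by a chain of `adj`-adjacent points of `X`. -/
def reachIn (adj : ℤ × ℤ → ℤ × ℤ → Prop) (X : Set (ℤ × ℤ)) (p q : ℤ × ℤ) : Prop :=
  Relation.ReflTransGen (fun a b => adj a b ∧ a ∈ X ∧ b ∈ X) p q

/-- `X` is `adj`-connected: any two of its points are joined by a chain in `X`. -/
def IsConnSet (adj : ℤ × ℤ → ℤ × ℤ → Prop) (X : Set (ℤ × ℤ)) : Prop :=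
  ∀ p ∈ X, ∀ q ∈ X, reachIn adj X p q

/-- The set of `adj`-connected components of `X`. -/
def comps (adj : ℤ × ℤ → ℤ × ℤ → Prop) (X : Set (ℤ × ℤ)) : Set (Set (ℤ × ℤ)) :=
  {C | ∃ p ∈ X, C = {q | reachIn adj X p q}}

/-- The number of `adj`-connected components of `X`. -/
noncomputable def ncc (adj : ℤ × ℤ → ℤ × ℤ → Prop) (X : Set (ℤ × ℤ)) : ℕ :=
  (comps adj X).ncard

/-- Punctured 4-neighborhood `N₄*(x)`. -/
def N4star (x : ℤ × ℤ) : Set (ℤ × ℤ) := {y | adj4 x y}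

/-- 4-neighborhood `N₄(x)` (including `x`). -/
def N4 (x : ℤ × ℤ) : Set (ℤ × ℤ) := insert x (N4star x)

/-- Punctured 8-neighborhood `N₈*(x)`. -/
def N8star (x : ℤ × ℤ) : Set (ℤ × ℤ) := {y | adj8 x y}

/-- 8-neighborhood `N₈(x)` (including `x`). -/
def N8 (x : ℤ × ℤ) : Set (ℤ × ℤ) := insert x (N8star x)

/-- Geodesic neighborhood `N₄²(x,X) = ⋃ {N₄(y) ∩ N₈*(x) ∩ X : y ∈ N₄*(x) ∩ X}`. -/
def geo4 (x : ℤ × ℤ) (X : Set (ℤ × ℤ)) : Set (ℤ × ℤ) :=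
  ⋃ y ∈ N4star x ∩ X, (N4 y ∩ N8star x ∩ X)

/-- Geodesic neighborhood `N₈¹(x,X) = N₈*(x) ∩ X`. -/
def geo8 (x : ℤ × ℤ) (X : Set (ℤ × ℤ)) : Set (ℤ × ℤ) := N8star x ∩ X

/-- Topology number `T₄(x,X)`, computed with respect to `X \ {x}`. -/
noncomputable def T4 (x : ℤ × ℤ) (X : Set (ℤ × ℤ)) : ℕ := ncc adj4 (geo4 x (X \ {x}))

/-- Topology number `T₈(x,X)`. -/
noncomputable def T8 (x : ℤ × ℤ) (X : Set (ℤ × ℤ)) : ℕ := ncc adj8 (geo8 x (X \ {x}))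

lemma reach_mono {adj : ℤ × ℤ → ℤ × ℤ → Prop} {X Y : Set (ℤ × ℤ)} (h : X ⊆ Y)
    {p q : ℤ × ℤ} (hr : reachIn adj X p q) : reachIn adj Y p q :=
  by
    unfold reachIn at *
    induction hr with
    | refl => exact Relation.ReflTransGen.refl
    | tail _ hab ih => exact ih.tail ⟨hab.1, h hab.2.1, h hab.2.2⟩

lemma ncc_one_conn {adj : ℤ × ℤ → ℤ × ℤ → Prop} {G : Set (ℤ × ℤ)}
    (h : ncc adj G = 1) : IsConnSet adj G := by
  intro p hp q hq
  obtain ⟨C, hC⟩ := Set.ncard_eq_one.mp h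
  have hp' : {r | reachIn adj G p r} ∈ comps adj G := ⟨p, hp, rfl⟩
  have hq' : {r | reachIn adj G q r} ∈ comps adj G := ⟨q, hq, rfl⟩
  rw [hC, Set.mem_singleton_iff] at hp' hq'
  have hqq : q ∈ {r | reachIn adj G q r} := Relation.ReflTransGen.refl
  rw [hq', ← hp'] at hqq
  exact hqq

lemma adj4_symm {p q : ℤ × ℤ} (h : adj4 p q) : adj4 q p := by
  unfold adj4 at *; omega

lemma adj4_ne {p q : ℤ × ℤ} (h : adj4 p q) : p ≠ q := by
  intro he; subst he; unfold adj4 at h; omega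

lemma nbr_sub_geo4 (x : ℤ × ℤ) (G : Set (ℤ × ℤ)) : N4star x ∩ G ⊆ geo4 x G := by
  rintro y ⟨hy, hyG⟩
  have hy' : adj4 x y := hy
  have h8 : y ∈ N8star x := by
    refine ⟨adj4_ne hy', ?_, ?_⟩ <;> (unfold adj4 at hy'; omega)
  exact Set.mem_biUnion (show y ∈ N4star x ∩ G from ⟨hy, hyG⟩)
    ⟨⟨Set.mem_insert _ _, h8⟩, hyG⟩

/-- Simple point removal preserves 4-connectivity: if `X ⊂ ℤ²` is finite and
4-connected, `x ∈ X` has a 4-neighbor in `X`, the geodesic neighborhood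
`N₄²(x, X\{x})` has exactly one 4-connected component, and `N₈¹(x, Xᶜ)` has exactly
one 8-connected component, then `X \ {x}` is still 4-connected. -/
theorem stmt_11 (X : Set (ℤ × ℤ)) (hfin : X.Finite) (hconn : IsConnSet adj4 X)
    (x : ℤ × ℤ) (hx : x ∈ X) (hnbr : (N4star x ∩ X).Nonempty)
    (hT4 : ncc adj4 (geo4 x (X \ {x})) = 1)
    (hT8 : ncc adj8 (geo8 x Xᶜ) = 1) :
    IsConnSet adj4 (X \ {x}) := by
  set G := X \ {x} with hG
  -- any two 4-neighbors of x inside G are connected inside G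
  have hnc : ∀ a ∈ N4star x ∩ G, ∀ b ∈ N4star x ∩ G, reachIn adj4 G a b := by
    intro a ha b hb
    have hconn' := ncc_one_conn hT4
    have hsub : geo4 x G ⊆ G := by
      rintro z hz
      simp only [geo4, Set.mem_iUnion] at hz
      obtain ⟨y, _, hzm⟩ := hz
      exact hzm.2
    exact reach_mono hsub
      (hconn' a (nbr_sub_geo4 x G ha) b (nbr_sub_geo4 x G hb))
  have key : ∀ p q : ℤ × ℤ, reachIn adj4 X p q → p ≠ x →
      (q ≠ x → reachIn adj4 G p q) ∧
      (q = x → ∃ q', q' ∈ N4star x ∩ G ∧ reachIn adj4 G p q') := by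
    intro p q h hp
    induction h with
    | refl => exact ⟨fun _ => Relation.ReflTransGen.refl, fun hq => absurd hq hp⟩
    | @tail b c hpb hbc ih =>
      obtain ⟨habc, hbX, hcX⟩ := hbc
      constructor
      · intro hc
        by_cases hb : b = x
        · obtain ⟨q', hq', hpq'⟩ := ih.2 hb
          have hcG : c ∈ N4star x ∩ G := ⟨by rw [hb] at habc; exact habc, hcX, hc⟩
          exact hpq'.trans (hnc q' hq' c hcG)
        · exact (ih.1 hb).tail ⟨habc, ⟨hbX, hb⟩, ⟨hcX, hc⟩⟩
      · intro hc
        by_cases hb : b = x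
        · exact absurd (hb.trans hc.symm) (adj4_ne habc)
        · exact ⟨b, ⟨adj4_symm (hc ▸ habc), hbX, hb⟩, ih.1 hb⟩
  intro p hp q hq
  exact (key p q (hconn p hp.1 q hq.1) hp.2).1 hq.2
end

section
/- The discrete Gaussian kernel matrix on a cycle is positive semidefinite: For N ≥ 1 and τ > 0, the circulant matrix K with entries K(i,j) = Σ_{m∈ℤ} exp(-(i-j+mN)²/(4τ)) (indices in ℤ/Nℤ) is symmetric positive semidefinite. -/
open Complex Real Matrix

private lemma summable_gauss {c : ℝ} (hc : 0 < c) :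
    Summable fun n : ℤ => Real.exp (-c * (n : ℝ) ^ 2) := by
  have hnat : Summable fun n : ℕ => Real.exp (-c * (n : ℝ) ^ 2) := by
    refine Summable.of_nonneg_of_le (fun n => Real.exp_nonneg _) (fun n => ?_)
      (Real.summable_exp_nat_mul_iff.mpr (neg_lt_zero.mpr hc))
    rw [mul_comm (n : ℝ) (-c)]
    apply Real.exp_le_exp.mpr
    have h1 : (n : ℝ) ≤ (n : ℝ) ^ 2 := by
      rcases Nat.eq_zero_or_pos n with h | h
      · simp [h]
      · nlinarith [(by exact_mod_cast h : (1:ℝ) ≤ (n:ℝ))]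
    nlinarith
  apply Summable.of_nat_of_neg
  · simpa using hnat
  · simpa using hnat

private lemma key_lemma (N : ℕ) (hN : 1 ≤ N) {τ : ℝ} (hτ : 0 < τ) (d : ℤ) :
    ((∑' m : ℤ, Real.exp (-((d : ℝ) + m * N) ^ 2 / (4 * τ))) : ℂ) =
      ((4 * π * τ / N ^ 2 : ℝ) ^ (1 / 2 : ℝ) : ℝ) *
        ∑' n : ℤ, (Real.exp (-π * (4 * π * τ / N ^ 2) * (n : ℝ) ^ 2) : ℂ) *
          Complex.exp (-((2 * π / N : ℝ) : ℂ) * I * n * d) := by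
  have hNR : (N : ℝ) ≠ 0 := Nat.cast_ne_zero.mpr (by omega)
  set a : ℝ := 4 * π * τ / N ^ 2 with ha_def
  have ha : 0 < a := by positivity
  have H := Complex.tsum_exp_neg_quadratic (a := (a : ℂ))
    (by simpa using ha) (-I * ((d : ℝ) / N))
  have hR : (∑' m : ℤ, Complex.exp (-π / (a : ℂ) * (m + I * (-I * ((d : ℝ) / N))) ^ 2)) =
      ((∑' m : ℤ, Real.exp (-((d : ℝ) + m * N) ^ 2 / (4 * τ))) : ℂ) := by
    congr 1
    funext m
    rw [Complex.ofReal_exp]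
    congr 1
    have hI : ∀ z : ℂ, I * (-I * z) = z := fun z => by
      rw [← mul_assoc, mul_neg, I_mul_I]; ring
    rw [hI, ha_def]
    have h1 : ((N : ℕ) : ℂ) ≠ 0 := Nat.cast_ne_zero.mpr (by omega)
    have h2 : ((π : ℝ) : ℂ) ≠ 0 := Complex.ofReal_ne_zero.mpr Real.pi_ne_zero
    have h3 : ((τ : ℝ) : ℂ) ≠ 0 := Complex.ofReal_ne_zero.mpr hτ.ne'
    push_cast
    field_simp
    ring
  have hL : (∑' n : ℤ, Complex.exp (-π * (a : ℂ) * n ^ 2 + 2 * π * (-I * ((d : ℝ) / N)) * n)) =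
      ∑' n : ℤ, (Real.exp (-π * a * (n : ℝ) ^ 2) : ℂ) *
        Complex.exp (-((2 * π / N : ℝ) : ℂ) * I * n * d) := by
    congr 1
    funext n
    rw [Complex.ofReal_exp, ← Complex.exp_add]
    congr 1
    push_cast
    field_simp
  rw [hL] at H
  rw [hR] at H
  have hA : ((a ^ (1 / 2 : ℝ) : ℝ) : ℂ) = (a : ℂ) ^ (1 / 2 : ℂ) := by
    rw [Complex.ofReal_cpow ha.le]; norm_num
  have hAne : ((a ^ (1 / 2 : ℝ) : ℝ) : ℂ) ≠ 0 := by
    simp only [ne_eq, Complex.ofReal_eq_zero]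
    exact (Real.rpow_pos_of_pos ha _).ne'
  rw [hA, H, ← mul_assoc, mul_one_div, div_self (by rwa [← hA]), one_mul]


/-- The periodized discrete Gaussian kernel matrix on a cycle of length `N` is
symmetric positive semidefinite: `K i j = Σ_{m ∈ ℤ} exp (-(i - j + m N)² / (4τ))`. -/
theorem stmt_18 (N : ℕ) (hN : 1 ≤ N) (τ : ℝ) (hτ : 0 < τ) :
    Matrix.PosSemidef (Matrix.of fun i j : Fin N =>
      ∑' m : ℤ, Real.exp (-(((i : ℤ) - (j : ℤ) + m * N : ℤ) : ℝ) ^ 2 / (4 * τ))) := by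
  have hNR : (N : ℝ) ≠ 0 := Nat.cast_ne_zero.mpr (by omega)
  set a : ℝ := 4 * π * τ / N ^ 2 with ha_def
  have ha : 0 < a := by positivity
  set A : ℝ := a ^ (1 / 2 : ℝ) with hA_def
  have hA : 0 < A := Real.rpow_pos_of_pos ha _
  set t : ℤ → ℝ := fun n => Real.exp (-π * a * (n : ℝ) ^ 2) with ht_def
  have htpos : ∀ n, 0 < t n := fun n => Real.exp_pos _
  set w : ℝ := 2 * π / N with hw_def
  set e : Fin N → ℤ → ℂ := fun i n => cexp (-(w : ℂ) * I * n * (i : ℕ)) with he_def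
  have he_abs : ∀ (i : Fin N) (n : ℤ), ‖e i n‖ = 1 := by
    intro i n
    rw [he_def]
    rw [Complex.norm_exp]
    simp [Complex.mul_re]
  have he_conj : ∀ (j : Fin N) (n : ℤ),
      (starRingEnd ℂ) (e j n) = cexp ((w : ℂ) * I * n * (j : ℕ)) := by
    intro j n
    rw [he_def, ← Complex.exp_conj]
    congr 1
    simp [_root_.map_mul, Complex.conj_ofReal, Complex.conj_I]
  -- entries of the matrix, complexified
  have hM : ∀ i j : Fin N,
      ((∑' m : ℤ, Real.exp (-(((i : ℤ) - (j : ℤ) + m * N : ℤ) : ℝ) ^ 2 / (4 * τ)) : ℝ) : ℂ) =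
      (A : ℂ) * ∑' n : ℤ, (t n : ℂ) * (e i n * (starRingEnd ℂ) (e j n)) := by
    intro i j
    rw [Complex.ofReal_tsum]
    have step1 : (∑' m : ℤ, ((Real.exp (-(((i : ℤ) - (j : ℤ) + m * N : ℤ) : ℝ) ^ 2 / (4 * τ)) : ℝ) : ℂ)) =
        ∑' m : ℤ, ((Real.exp (-((((i : ℤ) - (j : ℤ) : ℤ) : ℝ) + m * N) ^ 2 / (4 * τ)) : ℝ) : ℂ) := by
      congr 1; funext m; congr 2; push_cast; ring
    rw [step1, key_lemma N hN hτ ((i : ℤ) - (j : ℤ))]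
    rw [← ha_def, ← hA_def]
    congr 1
    congr 1
    funext n
    congr 1
    rw [he_conj, he_def, ← Complex.exp_add]
    congr 1
    rw [hw_def]
    push_cast
    ring
  rw [Matrix.posSemidef_iff_dotProduct_mulVec]
  constructor
  · -- Hermitian
    ext i j
    simp only [Matrix.conjTranspose_apply, Matrix.of_apply, star_trivial]
    rw [← (Equiv.neg ℤ).tsum_eq]
    congr 1
    funext m
    simp only [Equiv.neg_apply]
    congr 1
    push_cast
    ring
  · intro x
    set S : ℤ → ℂ := fun n => ∑ j : Fin N, ((x j : ℝ) : ℂ) * e j n with hS_def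
    set F : Fin N → Fin N → ℤ → ℂ := fun i j n =>
      ((A : ℂ) * (t n : ℂ)) * ((((x i : ℝ) : ℂ) * e i n) *
        (starRingEnd ℂ) (((x j : ℝ) : ℂ) * e j n)) with hF_def
    have hsum : ∀ i j : Fin N, Summable (F i j) := by
      intro i j
      apply Summable.of_norm
      refine Summable.of_nonneg_of_le (fun n => norm_nonneg _) (fun n => ?_)
        ((summable_gauss (show (0:ℝ) < π * a by positivity)).mul_left (A * |x i| * |x j|))
      rw [hF_def]
      simp only [norm_mul, Complex.norm_real, RingHomIsometric.norm_map]
      rw [he_abs, he_abs]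
      apply le_of_eq
      rw [Real.norm_of_nonneg hA.le, Real.norm_of_nonneg (htpos n).le,
        Real.norm_eq_abs, Real.norm_eq_abs]
      have ht' : t n = Real.exp (-(π * a) * (n : ℝ) ^ 2) := by
        simp only [ht_def]; ring_nf
      rw [ht']
      ring
    have hQ : ((star x ⬝ᵥ (Matrix.of fun i j : Fin N =>
        ∑' m : ℤ, Real.exp (-(((i : ℤ) - (j : ℤ) + m * N : ℤ) : ℝ) ^ 2 / (4 * τ))) *ᵥ x : ℝ) : ℂ)
        = (A : ℂ) * ((∑' n : ℤ, t n * Complex.normSq (S n) : ℝ) : ℂ) := by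
      simp only [dotProduct, Matrix.mulVec, Matrix.of_apply, Pi.star_apply, star_trivial]
      simp only [Complex.ofReal_sum, Complex.ofReal_mul]
      calc (∑ i : Fin N, (x i : ℂ) * ∑ j : Fin N, ((∑' m : ℤ,
              Real.exp (-(((i : ℤ) - (j : ℤ) + m * N : ℤ) : ℝ) ^ 2 / (4 * τ)) : ℝ) : ℂ) * (x j : ℂ))
          = ∑ i : Fin N, ∑ j : Fin N, ∑' n : ℤ, F i j n := by
            refine Finset.sum_congr rfl fun i _ => ?_
            rw [Finset.mul_sum]
            refine Finset.sum_congr rfl fun j _ => ?_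
            rw [hM i j]
            refine Eq.symm ?_
            calc ∑' n : ℤ, F i j n
                = ∑' n : ℤ, ((x i : ℂ) * (((A : ℂ) * ((t n : ℂ) *
                    (e i n * (starRingEnd ℂ) (e j n)))) * (x j : ℂ))) := by
                  congr 1
                  funext n
                  rw [hF_def]
                  simp only [_root_.map_mul, Complex.conj_ofReal]
                  ring
              _ = (x i : ℂ) * (((A : ℂ) * ∑' n : ℤ, (t n : ℂ) *
                    (e i n * (starRingEnd ℂ) (e j n))) * (x j : ℂ)) := by
                  rw [tsum_mul_left, tsum_mul_right, tsum_mul_left]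
        _ = ∑' n : ℤ, ∑ i : Fin N, ∑ j : Fin N, F i j n := by
            rw [Summable.tsum_finsetSum fun i (_ : i ∈ Finset.univ) =>
              (hasSum_sum fun j (_ : j ∈ Finset.univ) => (hsum i j).hasSum).summable]
            refine Finset.sum_congr rfl fun i _ => ?_
            rw [Summable.tsum_finsetSum fun j (_ : j ∈ Finset.univ) => hsum i j]
        _ = ∑' n : ℤ, ((A : ℂ) * (t n : ℂ)) * (S n * (starRingEnd ℂ) (S n)) := by
            congr 1
            funext n
            rw [hS_def]
            simp only [map_sum]
            rw [Finset.sum_mul_sum]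
            simp only [Finset.mul_sum]
            rfl
        _ = ∑' n : ℤ, (A : ℂ) * ((t n * Complex.normSq (S n) : ℝ) : ℂ) := by
            congr 1
            funext n
            rw [Complex.mul_conj]
            push_cast
            ring
        _ = (A : ℂ) * ((∑' n : ℤ, t n * Complex.normSq (S n) : ℝ) : ℂ) := by
            rw [tsum_mul_left, Complex.ofReal_tsum]
    have hQr : (star x ⬝ᵥ (Matrix.of fun i j : Fin N =>
        ∑' m : ℤ, Real.exp (-(((i : ℤ) - (j : ℤ) + m * N : ℤ) : ℝ) ^ 2 / (4 * τ))) *ᵥ x : ℝ)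
        = A * ∑' n : ℤ, t n * Complex.normSq (S n) := by
      exact Complex.ofReal_injective (by rw [Complex.ofReal_mul]; exact hQ)
    rw [hQr]
    apply mul_nonneg hA.le
    apply tsum_nonneg
    intro n
    exact mul_nonneg (htpos n).le (Complex.normSq_nonneg _)
end
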